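/- arXiv:2411.04745 — 2 statements merged into one kernel-verified Lean document; each statement's English description precedes it below -/
import Mathlib

section
/- Let R be a commutative ring that is either a field or a countable principal ideal domain, and let (M_i, g_i) be an inverse sequence of countably generated R-modules. If the inverse limit lim M_i is a countably generated R-module, then there exists i₀ such that for every k ≥ i₀ the projection f_k : lim M_i → M_k is injective. -/
/-- The Eilenberg map `Δ : ∏ᵢ Mᵢ → ∏ᵢ Mᵢ`, `Δ((mᵢ)ᵢ) = (mᵢ − gᵢ(m_{i+1}))ᵢ`, of an inverse
sequence of `R`-modules `(Mᵢ, gᵢ)`. -/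
noncomputable def eilenberg (R : Type) [CommRing R] (M : ℕ → Type)
    [∀ i, AddCommGroup (M i)] [∀ i, Module R (M i)]
    (g : ∀ i : ℕ, M (i + 1) →ₗ[R] M i) : ((i : ℕ) → M i) →ₗ[R] ((i : ℕ) → M i) where
  toFun x := fun i => x i - g i (x (i + 1))
  map_add' x y := by
    funext i
    simp only [Pi.add_apply, map_add]
    abel
  map_smul' c x := by
    funext i
    simp only [Pi.smul_apply, map_smul, RingHom.id_apply, smul_sub]

/-- The inverse limit `lim Mᵢ` of an inverse sequence, as the kernel of the Eilenberg map. -/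
noncomputable def invLim (R : Type) [CommRing R] (M : ℕ → Type)
    [∀ i, AddCommGroup (M i)] [∀ i, Module R (M i)]
    (g : ∀ i : ℕ, M (i + 1) →ₗ[R] M i) : Submodule R ((i : ℕ) → M i) :=
  LinearMap.ker (eilenberg R M g)

/-- The derived limit `lim¹ Mᵢ` of an inverse sequence, as the cokernel of the Eilenberg map. -/
noncomputable abbrev derivedLim (R : Type) [CommRing R] (M : ℕ → Type)
    [∀ i, AddCommGroup (M i)] [∀ i, Module R (M i)]
    (g : ∀ i : ℕ, M (i + 1) →ₗ[R] M i) : Type :=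
  ((i : ℕ) → M i) ⧸ LinearMap.range (eilenberg R M g)

/-- The projection `lim Mᵢ → M_k`. -/
noncomputable def limProj (R : Type) [CommRing R] (M : ℕ → Type)
    [∀ i, AddCommGroup (M i)] [∀ i, Module R (M i)]
    (g : ∀ i : ℕ, M (i + 1) →ₗ[R] M i) (k : ℕ) : ↥(invLim R M g) →ₗ[R] M k :=
  (LinearMap.proj k).comp (invLim R M g).subtype

/-- The composite bonding map `f_i^{i+j} : M_{i+j} → M_i` of an inverse sequence. -/
noncomputable def transDown (R : Type) [CommRing R] (M : ℕ → Type)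
    [∀ i, AddCommGroup (M i)] [∀ i, Module R (M i)]
    (g : ∀ i : ℕ, M (i + 1) →ₗ[R] M i) : (i j : ℕ) → M (i + j) →ₗ[R] M i
  | _, 0 => LinearMap.id
  | i, j + 1 => (transDown R M g i j).comp (g (i + j))

/-- An inverse sequence satisfies the *Mittag-Leffler condition* if for every `i` the
decreasing sequence of images `range f_i^j ⊆ M_i` is eventually constant. -/
def MittagLeffler (R : Type) [CommRing R] (M : ℕ → Type)
    [∀ i, AddCommGroup (M i)] [∀ i, Module R (M i)]
    (g : ∀ i : ℕ, M (i + 1) →ₗ[R] M i) : Prop :=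
  ∀ i : ℕ, ∃ j : ℕ, ∀ k : ℕ,
    LinearMap.range (transDown R M g i (j + k)) = LinearMap.range (transDown R M g i j)

/-- An inverse sequence is *stable* if it satisfies the Mittag-Leffler condition and the
projections `lim Mᵢ → Mᵢ` are injective for all sufficiently large `i`. -/
def IsStable (R : Type) [CommRing R] (M : ℕ → Type)
    [∀ i, AddCommGroup (M i)] [∀ i, Module R (M i)]
    (g : ∀ i : ℕ, M (i + 1) →ₗ[R] M i) : Prop :=
  MittagLeffler R M g ∧ ∃ i₀ : ℕ, ∀ i : ℕ, i₀ ≤ i → Function.Injective (limProj R M g i)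

/-- An `R`-module is *countably generated* if it is the span of a countable subset. -/
def CountablyGeneratedMod (R : Type) (M : Type) [CommRing R] [AddCommGroup M]
    [Module R M] : Prop :=
  ∃ S : Set M, S.Countable ∧ Submodule.span R S = ⊤

/-!
If infinitely many projections `f_k` fail to be injective, one finds elements `x₀, x₁, …` of the
limit and coordinates `cₙ` with `xₙ(cₙ) ≠ 0` and `xⱼ(cₙ) = 0` for `j > n`, each `xⱼ` vanishing below
coordinate `j`. The series `a ↦ ∑ aₙ • xₙ` is then a linear map `R^ℕ → lim Mᵢ`, and reading off
coordinates `c₀, c₁, …` shows it is injective on `{0,1}`-sequences, and on all of `R^ℕ` over a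
field. Over a countable ring a countably generated module is countable, yet would contain `2^ℵ₀`
elements; over a field it has countable dimension, while `dim R^ℕ = |R^ℕ| > ℵ₀` (Erdős–Kaplansky).
-/

namespace invLim

variable {R : Type} [CommRing R] {M : ℕ → Type} [∀ i, AddCommGroup (M i)] [∀ i, Module R (M i)]
  {g : ∀ i : ℕ, M (i + 1) →ₗ[R] M i}

theorem mem_iff {x : (i : ℕ) → M i} : x ∈ invLim R M g ↔ ∀ m, x m = g m (x (m + 1)) := by
  simp [invLim, eilenberg, funext_iff, sub_eq_zero]

theorem apply_eq {x : (i : ℕ) → M i} (hx : x ∈ invLim R M g) (m : ℕ) :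
    x m = g m (x (m + 1)) :=
  mem_iff.mp hx m

theorem apply_eq_zero_of_le {x : (i : ℕ) → M i} (hx : x ∈ invLim R M g) {m k : ℕ}
    (hmk : m ≤ k) (hk : x k = 0) : x m = 0 :=
  Nat.decreasingInduction (fun i _ hi => by rw [apply_eq hx, hi, map_zero]) hk hmk

theorem exists_apply_ne_zero_of_not_injective_limProj {k : ℕ}
    (hk : ¬Function.Injective (limProj R M g k)) :
    ∃ x : invLim R M g, ∃ j, k < j ∧ (∀ m ≤ k, x.1 m = 0) ∧ x.1 j ≠ 0 := by
  obtain ⟨x, hxk, hx0⟩ : ∃ x, limProj R M g k x = 0 ∧ x ≠ 0 := by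
    simpa [injective_iff_map_eq_zero] using hk
  have hvan : ∀ m ≤ k, x.1 m = 0 := fun m hm => apply_eq_zero_of_le x.2 hm hxk
  obtain ⟨j, hj⟩ := Function.ne_iff.mp (Subtype.coe_ne_coe.mpr hx0)
  exact ⟨x, j, lt_of_not_ge fun hjk => hj (hvan j hjk), hvan, hj⟩

theorem exists_triangular_family
    (h : ∀ i, ∃ k, i ≤ k ∧ ¬Function.Injective (limProj R M g k)) :
    ∃ (x : ℕ → invLim R M g) (c : ℕ → ℕ), (∀ j m, m < j → (x j).1 m = 0) ∧
      (∀ n j, n < j → (x j).1 (c n) = 0) ∧ ∀ n, (x n).1 (c n) ≠ 0 := by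
  have hstep : ∀ i, ∃ y : invLim R M g, ∃ j, i < j ∧ (∀ m ≤ i, y.1 m = 0) ∧ y.1 j ≠ 0 := by
    intro i
    obtain ⟨k, hik, hk⟩ := h i
    obtain ⟨y, j, hkj, hvan, hne⟩ := exists_apply_ne_zero_of_not_injective_limProj hk
    exact ⟨y, j, hik.trans_lt hkj, fun m hm => hvan m (hm.trans hik), hne⟩
  choose y next hnext hvan hne using hstep
  set k : ℕ → ℕ := fun n => next^[n] 0
  have hk_succ (n : ℕ) : k (n + 1) = next (k n) := Function.iterate_succ_apply' next n 0
  have hk : StrictMono k := strictMono_nat_of_lt_succ fun n => (hk_succ n).symm ▸ hnext (k n)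
  refine ⟨fun n => y (k n), fun n => k (n + 1), fun j m hmj => ?_, fun n j hnj => ?_,
    fun n => ?_⟩
  · exact hvan _ m (hmj.le.trans hk.le_apply)
  · exact hvan _ _ (hk.monotone hnj)
  · show (y (k n)).1 (k (n + 1)) ≠ 0
    rw [hk_succ]
    exact hne _

variable (x : ℕ → invLim R M g) (hx : ∀ j m, m < j → (x j).1 m = 0)

-- Since `x j` vanishes below `j`, coordinate `m` of the formal series `∑ aⱼ • xⱼ` is a finite sum.
noncomputable def seriesMap : (ℕ → R) →ₗ[R] invLim R M g :=
  LinearMap.codRestrict _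
    (LinearMap.pi fun m => ∑ j ∈ Finset.range (m + 1), (LinearMap.proj j).smulRight ((x j).1 m))
    fun a => mem_iff.mpr fun m => by
      simp [Finset.sum_range_succ _ (m + 1), ← apply_eq (x _).2,
        hx _ _ m.lt_succ_self]

theorem seriesMap_apply (a : ℕ → R) (m : ℕ) :
    (seriesMap x hx a).1 m = ∑ j ∈ Finset.range (m + 1), a j • (x j).1 m := by
  simp [seriesMap]

variable (c : ℕ → ℕ) (htri : ∀ n j, n < j → (x j).1 (c n) = 0)

include htri in
theorem seriesMap_apply_eq_smul {a : ℕ → R} {n : ℕ} (ha : ∀ j < n, a j = 0) :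
    (seriesMap x hx a).1 (c n) = a n • (x n).1 (c n) := by
  rw [seriesMap_apply]
  refine Finset.sum_eq_single n (fun j _ hjn => ?_) (fun hn => ?_)
  · rcases hjn.lt_or_gt with hj | hj
    · rw [ha j hj, zero_smul]
    · rw [htri n j hj, smul_zero]
  · rw [hx n (c n) (by simpa using hn), smul_zero]

include htri in
theorem seriesMap_ne_zero {a : ℕ → R} (ha : a ≠ 0)
    (hsmul : ∀ n, a n ≠ 0 → a n • (x n).1 (c n) ≠ 0) : seriesMap x hx a ≠ 0 := by
  classical
  have hex : ∃ n, a n ≠ 0 := Function.ne_iff.mp ha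
  have hfirst : ∀ j < Nat.find hex, a j = 0 := fun j hj => not_not.mp (Nat.find_min hex hj)
  intro h0
  apply hsmul _ (Nat.find_spec hex)
  rw [← seriesMap_apply_eq_smul x hx c htri hfirst, h0]
  rfl

variable (hne : ∀ n, (x n).1 (c n) ≠ 0)

include htri hne in
theorem seriesMap_injective [IsDomain R] [∀ i, Module.IsTorsionFree R (M i)] :
    Function.Injective (seriesMap x hx) :=
  (injective_iff_map_eq_zero _).mpr fun _ h => by_contra fun ha =>
    seriesMap_ne_zero x hx c htri ha (fun n hn => smul_ne_zero hn (hne n)) h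

include htri hne in
theorem seriesMap_indicator_injective :
    Function.Injective fun b : ℕ → Bool => seriesMap x hx fun n => if b n then 1 else 0 := by
  have := nontrivial_of_ne _ _ (hne 0)
  have := Module.nontrivial R (M (c 0))
  intro b b' h
  by_contra hbb'
  set a : ℕ → R := (fun n => if b n then 1 else 0) - fun n => if b' n then 1 else 0
  have hzero (n : ℕ) : b n = b' n → a n = 0 := by
    simp only [a, Pi.sub_apply]; cases b n <;> cases b' n <;> simp
  have hunit (n : ℕ) : b n ≠ b' n → IsUnit (a n) := by
    simp only [a, Pi.sub_apply]; cases b n <;> cases b' n <;> simp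
  obtain ⟨n, hn⟩ := Function.ne_iff.mp hbb'
  refine seriesMap_ne_zero x hx c htri (Function.ne_iff.mpr ⟨n, (hunit n hn).ne_zero⟩)
    (fun n han => ?_) ?_
  · rw [Ne, (hunit n (mt (hzero n) han)).smul_eq_zero]
    exact hne n
  · exact (map_sub _ _ _).trans (sub_eq_zero.mpr h)

end invLim

section CountablyGenerated

variable {R N : Type} [CommRing R] [AddCommGroup N] [Module R N]

theorem CountablyGeneratedMod.countable [Countable R] (h : CountablyGeneratedMod R N) :
    Countable N := by
  obtain ⟨S, hS, hspan⟩ := h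
  have : Countable S := hS.to_subtype
  refine Function.Surjective.countable (f := Finsupp.linearCombination R ((↑) : S → N)) ?_
  rw [← LinearMap.range_eq_top, Finsupp.range_linearCombination, Subtype.range_coe, hspan]

theorem CountablyGeneratedMod.rank_le_aleph0 [StrongRankCondition R]
    (h : CountablyGeneratedMod R N) : Module.rank R N ≤ Cardinal.aleph0 := by
  obtain ⟨S, hS, hspan⟩ := h
  calc Module.rank R N = Module.rank R (Submodule.span R S) := by rw [hspan, rank_top]
    _ ≤ Cardinal.mk S := rank_span_le S
    _ ≤ Cardinal.aleph0 := Cardinal.mk_le_aleph0_iff.mpr hS.to_subtype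

end CountablyGenerated

theorem not_countable_nat_bool : ¬Countable (ℕ → Bool) := by
  rw [← Cardinal.mk_le_aleph0_iff]
  simpa using Cardinal.aleph0_lt_continuum

theorem aleph0_lt_rank_fun_nat (K : Type) [Field K] :
    Cardinal.aleph0 < Module.rank K (ℕ → K) := by
  rw [rank_fun_infinite]
  simpa using (Cardinal.cantor _).trans_le
    (Cardinal.power_le_power_right (Cardinal.two_le_iff.mpr ⟨0, 1, zero_ne_one⟩))

theorem limProj_eventually_injective_of_countablyGenerated_general
    (R : Type) [CommRing R]
    (hR : IsField R ∨ (Countable R ∧ IsDomain R ∧ IsPrincipalIdealRing R))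
    (M : ℕ → Type) [∀ i, AddCommGroup (M i)] [∀ i, Module R (M i)]
    (g : ∀ i : ℕ, M (i + 1) →ₗ[R] M i)
    (hlim : CountablyGeneratedMod R ↥(invLim R M g)) :
    ∃ i₀ : ℕ, ∀ k : ℕ, i₀ ≤ k → Function.Injective (limProj R M g k) := by
  by_contra hnot
  push Not at hnot
  obtain ⟨x, c, hx, htri, hne⟩ := invLim.exists_triangular_family hnot
  rcases hR with hfield | ⟨hcount, -, -⟩
  · let _ : Field R := hfield.toField
    have hrank : Module.rank R (ℕ → R) ≤ Cardinal.aleph0 :=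
      ((invLim.seriesMap x hx).rank_le_of_injective
        (invLim.seriesMap_injective x hx c htri hne)).trans hlim.rank_le_aleph0
    exact hrank.not_gt (aleph0_lt_rank_fun_nat R)
  · have := hlim.countable
    exact not_countable_nat_bool (invLim.seriesMap_indicator_injective x hx c htri hne).countable

/-- Let `R` be a field or a countable PID, and let `(Mᵢ, gᵢ)` be an inverse sequence of
countably generated `R`-modules.  If the inverse limit `lim Mᵢ` is countably generated, then
the projections `f_k : lim Mᵢ → M_k` are injective for all sufficiently large `k`. -/
theorem limProj_eventually_injective_of_countablyGenerated
    (R : Type) [CommRing R]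
    (hR : IsField R ∨ (Countable R ∧ IsDomain R ∧ IsPrincipalIdealRing R))
    (M : ℕ → Type) [∀ i, AddCommGroup (M i)] [∀ i, Module R (M i)]
    (g : ∀ i : ℕ, M (i + 1) →ₗ[R] M i)
    (hcg : ∀ i : ℕ, CountablyGeneratedMod R (M i))
    (hlim : CountablyGeneratedMod R ↥(invLim R M g)) :
    ∃ i₀ : ℕ, ∀ k : ℕ, i₀ ≤ k → Function.Injective (limProj R M g k) :=
  limProj_eventually_injective_of_countablyGenerated_general R hR M g hlim
end

section
/- Let R be a field, let (M_i, g_i) be an inverse sequence of countably generated R-modules, and let N be an R-module. If the inverse limit lim M_i has countable dimension over R, then the canonical R-linear map Φ : lim→ Hom_R(M_i, N) → Hom_R(lim M_i, N) is surjective. -/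
/-- The composite bonding map `f_i^j : M_j → M_i` (for `i ≤ j`) of an inverse sequence. -/
noncomputable def transLE (R : Type) [CommRing R] (M : ℕ → Type)
    [∀ i, AddCommGroup (M i)] [∀ i, Module R (M i)]
    (g : ∀ i : ℕ, M (i + 1) →ₗ[R] M i) (i j : ℕ) (h : i ≤ j) : M j →ₗ[R] M i :=
  Nat.leRecOn h (fun {k} (f : M k →ₗ[R] M i) => f.comp (g k)) LinearMap.id

theorem transLE_apply_of_mem_invLim (R : Type) [CommRing R] (M : ℕ → Type)
    [∀ i, AddCommGroup (M i)] [∀ i, Module R (M i)]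
    (g : ∀ i : ℕ, M (i + 1) →ₗ[R] M i) (x : (i : ℕ) → M i) (hx : x ∈ invLim R M g)
    (i : ℕ) : ∀ (j : ℕ) (h : i ≤ j), transLE R M g i j h (x j) = x i := by
  have hg : ∀ m : ℕ, g m (x (m + 1)) = x m := by
    intro m
    have : eilenberg R M g x = 0 := hx
    have h2 := congrFun this m
    have h3 : x m - g m (x (m + 1)) = 0 := h2
    have := sub_eq_zero.mp h3
    exact this.symm
  intro j h
  induction j, h using Nat.le_induction with
  | base => simp [transLE, Nat.leRecOn_self]
  | succ j hij ih =>
      rw [transLE, Nat.leRecOn_succ hij, LinearMap.comp_apply, hg j]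
      exact ih

/-- The canonical map `lim→ Hom(Mᵢ, N) → Hom(lim Mᵢ, N)`, given on the `i`-th component of
the direct limit by precomposition with the projection `fᵢ : lim Mᵢ → Mᵢ`. -/
noncomputable def homLimCanonical (R : Type) [CommRing R] (M : ℕ → Type)
    [∀ i, AddCommGroup (M i)] [∀ i, Module R (M i)]
    (g : ∀ i : ℕ, M (i + 1) →ₗ[R] M i) (N : Type) [AddCommGroup N] [Module R N] :
    Module.DirectLimit (fun i => M i →ₗ[R] N)
        (fun i j hij => LinearMap.lcomp R N (transLE R M g i j hij)) →ₗ[R]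
      (↥(invLim R M g) →ₗ[R] N) :=
  Module.DirectLimit.lift R ℕ (fun i => M i →ₗ[R] N)
    (fun i j hij => LinearMap.lcomp R N (transLE R M g i j hij))
    (fun i => LinearMap.lcomp R N (limProj R M g i))
    (fun i j hij α => by
      ext x
      simp only [LinearMap.lcomp_apply, LinearMap.comp_apply, limProj,
        LinearMap.proj_apply, Submodule.subtype_apply]
      exact congrArg α (transLE_apply_of_mem_invLim R M g x.1 x.2 i j hij))

open Cardinal Module Submodule

/-- Completeness of `L` for the linear topology with the `K n` as a basis of neighbourhoods
of `0`, tested on sequences that are Cauchy at unit speed. -/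
def IsCompleteFiltration {R L : Type*} [Ring R] [AddCommGroup L] [Module R L]
    (K : ℕ → Submodule R L) : Prop :=
  ∀ s : ℕ → L, (∀ n, s (n + 1) - s n ∈ K n) → ∃ x, ∀ n, x - s n ∈ K n

section Ring

variable {R L : Type*} [Ring R] [AddCommGroup L] [Module R L] {K : ℕ → Submodule R L}

theorem sub_mem_of_forall_succ_sub_mem (hK : Antitone K) {s : ℕ → L} {idx : ℕ → ℕ}
    (hidx : Monotone idx) (hs : ∀ n, s (n + 1) - s n ∈ K (idx n)) {n m : ℕ} (hnm : n ≤ m) :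
    s m - s n ∈ K (idx n) := by
  induction m, hnm using Nat.le_induction with
  | base => simp
  | succ m hnm ih =>
    have := add_mem (hK (hidx hnm) (hs m)) ih
    rwa [sub_add_sub_cancel] at this

theorem IsCompleteFiltration.comp_strictMono (hK : Antitone K) (hc : IsCompleteFiltration K)
    {idx : ℕ → ℕ} (hidx : StrictMono idx) : IsCompleteFiltration (K ∘ idx) := by
  intro s hs
  obtain ⟨x, hx⟩ := hc s fun n => hK hidx.le_apply (hs n)
  refine ⟨x, fun n => ?_⟩
  have := add_mem (hx (idx n)) (sub_mem_of_forall_succ_sub_mem hK hidx.monotone hs hidx.le_apply)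
  rwa [sub_add_sub_cancel] at this

theorem exists_seq_forall_notMem_sup (F : ℕ → Submodule R L)
    (hstep : ∀ n (y : L) i, ∃ v ∈ K i, ∃ j, i < j ∧ y + v ∉ F n ⊔ K j) :
    ∃ (s : ℕ → L) (idx : ℕ → ℕ), StrictMono idx ∧ (∀ n, s (n + 1) - s n ∈ K (idx n)) ∧
      ∀ n, s (n + 1) ∉ F n ⊔ K (idx (n + 1)) := by
  choose v hvK j hlt hv using hstep
  let seq : ℕ → L × ℕ := fun n =>
    Nat.rec (0, 0) (fun n p => (p.1 + v n p.1 p.2, j n p.1 p.2)) n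
  refine ⟨fun n => (seq n).1, fun n => (seq n).2,
    strictMono_nat_of_lt_succ fun n => hlt n _ _, fun n => ?_, fun n => hv n _ _⟩
  simpa [seq] using hvK n (seq n).1 (seq n).2

end Ring

section Field

variable {R L : Type*} [Field R] [AddCommGroup L] [Module R L] {K : ℕ → Submodule R L}

theorem finrank_le_of_le_sup_of_inf_eq_bot {S G H : Submodule R L} [FiniteDimensional R G]
    (hle : S ≤ G ⊔ H) (hSH : S ⊓ H = ⊥) : finrank R S ≤ finrank R G := by
  have hinj : Function.Injective (H.mkQ ∘ₗ S.subtype) := by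
    rw [← LinearMap.ker_eq_bot, LinearMap.ker_comp, ker_mkQ, ← disjoint_iff_comap_eq_bot]
    exact disjoint_iff.2 hSH
  calc finrank R S = finrank R (LinearMap.range (H.mkQ ∘ₗ S.subtype)) :=
        (LinearMap.finrank_range_of_inj hinj).symm
    _ ≤ finrank R (G.map H.mkQ) := by
        refine Submodule.finrank_mono ?_
        rw [LinearMap.range_comp, range_subtype]
        simpa [Submodule.map_sup] using map_mono (f := H.mkQ) hle
    _ ≤ finrank R G := finrank_map_le _ _

theorem exists_inf_eq_bot_of_iInf_eq_bot (hK : Antitone K) (hbot : ⨅ j, K j = ⊥)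
    (S : Submodule R L) [FiniteDimensional R S] : ∃ j, S ⊓ K j = ⊥ := by
  set j₀ := Function.argmin fun j => finrank R ↥(S ⊓ K j)
  refine ⟨j₀, eq_bot_iff.2 (hbot ▸ le_iInf fun j => ?_)⟩
  rcases le_total j j₀ with h | h
  · exact inf_le_right.trans (hK h)
  · have : S ⊓ K j = S ⊓ K j₀ :=
      eq_of_le_of_finrank_le (inf_le_inf_left _ (hK h)) (Function.argmin_le (fun j => finrank R ↥(S ⊓ K j)) j)
    exact this ▸ inf_le_right

theorem exists_le_finiteDimensional_finrank_eq {P : Submodule R L}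
    (hP : ¬FiniteDimensional R P) (n : ℕ) :
    ∃ S ≤ P, FiniteDimensional R S ∧ finrank R S = n := by
  obtain ⟨b, hbP, hspan, hind⟩ := exists_linearIndependent R (P : Set L)
  have hb : b.Infinite := fun hfin =>
    hP ((hspan.trans (span_eq P)) ▸ FiniteDimensional.span_of_finite R hfin)
  obtain ⟨t, htb, hcard⟩ := hb.exists_subset_card_eq n
  exact ⟨span R t, span_le.2 (htb.trans hbP), FiniteDimensional.span_finset R t,
    by rw [finrank_span_finset_eq_card (LinearIndepOn.mono (s := b) hind htb), hcard]⟩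

theorem exists_not_le_sup_of_not_finiteDimensional (hK : Antitone K) (hbot : ⨅ j, K j = ⊥)
    {i : ℕ} (hi : ¬FiniteDimensional R (K i)) (G : Submodule R L) [FiniteDimensional R G] :
    ∃ j, ¬K i ≤ G ⊔ K j := by
  obtain ⟨S, hSi, hSfin, hS⟩ := exists_le_finiteDimensional_finrank_eq hi (finrank R G + 1)
  obtain ⟨j, hj⟩ := exists_inf_eq_bot_of_iInf_eq_bot hK hbot S
  refine ⟨j, fun h => ?_⟩
  have := finrank_le_of_le_sup_of_inf_eq_bot (hSi.trans h) hj
  omega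

theorem exists_mem_add_notMem_sup (hK : Antitone K) (hbot : ⨅ j, K j = ⊥) {i : ℕ}
    (hi : ¬FiniteDimensional R (K i)) (G : Submodule R L) [FiniteDimensional R G] (y : L) :
    ∃ v ∈ K i, ∃ j, i < j ∧ y + v ∉ G ⊔ K j := by
  obtain ⟨j, hj⟩ := exists_not_le_sup_of_not_finiteDimensional hK hbot hi G
  obtain ⟨v, hv, hvj⟩ := SetLike.not_le_iff_exists.1 hj
  have hle : G ⊔ K (max j (i + 1)) ≤ G ⊔ K j := sup_le_sup_left (hK (le_max_left _ _)) _
  have hlt : i < max j (i + 1) := by omega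
  by_cases hy : y ∈ G ⊔ K j
  · exact ⟨v, hv, _, hlt, fun h => hvj (by simpa using sub_mem (hle h) hy)⟩
  · exact ⟨0, zero_mem _, _, hlt, fun h => hy (hle (by simpa using h))⟩

theorem exists_finiteDimensional_cover_of_rank_le_aleph0 (h : Module.rank R L ≤ ℵ₀) :
    ∃ F : ℕ → Submodule R L, (∀ n, FiniteDimensional R (F n)) ∧ ∀ x, ∃ n, x ∈ F n := by
  set B := Basis.ofVectorSpaceIndex R L
  have hB : B.Countable := by
    rwa [← Set.countable_coe_iff, ← mk_le_aleph0_iff, (Basis.ofVectorSpace R L).mk_eq_rank'']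
  obtain ⟨T, hT⟩ := (Set.countable_ofPred_finite_subset hB).exists_eq_range
    ⟨∅, Set.finite_empty, Set.empty_subset _⟩
  refine ⟨fun n => span R (T n), fun n => ?_, fun x => ?_⟩
  · have : T n ∈ {t | t.Finite ∧ t ⊆ B} := hT ▸ Set.mem_range_self n
    exact FiniteDimensional.span_of_finite R this.1
  · have hspan : span R B = ⊤ := by
      simpa only [Basis.range_ofVectorSpace] using (Basis.ofVectorSpace R L).span_eq
    have hx : x ∈ span R B := hspan ▸ mem_top
    obtain ⟨T', hT'B, hxT'⟩ := mem_span_finite_of_mem_span hx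
    obtain ⟨n, hn⟩ : (T' : Set L) ∈ Set.range T := hT ▸ ⟨T'.finite_toSet, hT'B⟩
    exact ⟨n, show x ∈ span R (T n) from hn ▸ hxT'⟩

theorem exists_eq_bot_of_rank_le_aleph0 (hK : Antitone K) (hbot : ⨅ j, K j = ⊥)
    (hc : IsCompleteFiltration K) (hrank : Module.rank R L ≤ ℵ₀) : ∃ j, K j = ⊥ := by
  by_contra! hne
  have hinf : ∀ i, ¬FiniteDimensional R (K i) := fun i _ => by
    obtain ⟨j, hj⟩ := exists_inf_eq_bot_of_iInf_eq_bot hK hbot (K i)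
    exact hne (max i j) (eq_bot_iff.2
      ((le_inf (hK (le_max_left _ _)) (hK (le_max_right _ _))).trans hj.le))
  obtain ⟨F, hF, hcover⟩ := exists_finiteDimensional_cover_of_rank_le_aleph0 hrank
  obtain ⟨s, idx, hidx, hs, havoid⟩ := exists_seq_forall_notMem_sup F fun n y i =>
    have := hF n
    exists_mem_add_notMem_sup hK hbot (hinf i) (F n) y
  obtain ⟨x, hx⟩ := hc.comp_strictMono hK hidx s hs
  obtain ⟨n, hn⟩ := hcover x
  exact havoid n (by simpa using sub_mem (mem_sup_left hn) (mem_sup_right (hx (n + 1))))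

end Field

section InverseSequence

variable {R : Type} [CommRing R] {M : ℕ → Type} [∀ i, AddCommGroup (M i)]
  [∀ i, Module R (M i)] {g : ∀ i : ℕ, M (i + 1) →ₗ[R] M i}

theorem mem_invLim_iff {x : (i : ℕ) → M i} :
    x ∈ invLim R M g ↔ ∀ i, g i (x (i + 1)) = x i := by
  simp only [invLim, LinearMap.mem_ker, funext_iff]
  exact forall_congr' fun i => sub_eq_zero.trans eq_comm

theorem antitone_ker_limProj : Antitone fun i => LinearMap.ker (limProj R M g i) :=
  antitone_nat_of_succ_le fun i z hz => by
    simp only [LinearMap.mem_ker, limProj, LinearMap.comp_apply, subtype_apply,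
      LinearMap.proj_apply] at hz ⊢
    rw [← mem_invLim_iff.1 z.2 i, hz, map_zero]

theorem iInf_ker_limProj : ⨅ i, LinearMap.ker (limProj R M g i) = ⊥ :=
  eq_bot_iff.2 fun _ hz => Subtype.ext <| funext fun i => (mem_iInf _).1 hz i

theorem isCompleteFiltration_ker_limProj :
    IsCompleteFiltration fun i => LinearMap.ker (limProj R M g i) := by
  intro s hs
  have hdiag : ∀ i, g i ((s (i + 1) : (j : ℕ) → M j) (i + 1)) = (s i : (j : ℕ) → M j) i := by
    intro i
    have := hs i
    simp [limProj, sub_eq_zero] at this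
    rw [mem_invLim_iff.1 (s (i + 1)).2 i, this]
  exact ⟨⟨fun i => (s i : (j : ℕ) → M j) i, mem_invLim_iff.2 hdiag⟩, fun n => by
    simp [limProj]⟩

end InverseSequence

theorem homLimCanonical_surjective_of_injective_limProj {R : Type} [Field R] {M : ℕ → Type}
    [∀ i, AddCommGroup (M i)] [∀ i, Module R (M i)] {g : ∀ i : ℕ, M (i + 1) →ₗ[R] M i}
    (N : Type) [AddCommGroup N] [Module R N] {i : ℕ} (hi : Function.Injective (limProj R M g i)) :
    Function.Surjective (homLimCanonical R M g N) := by
  intro φ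
  obtain ⟨r, hr⟩ := (limProj R M g i).exists_leftInverse_of_injective (LinearMap.ker_eq_bot.2 hi)
  refine ⟨Module.DirectLimit.of R ℕ _ _ i (φ ∘ₗ r), ?_⟩
  rw [homLimCanonical, Module.DirectLimit.lift_of, LinearMap.lcomp_apply', LinearMap.comp_assoc,
    hr, LinearMap.comp_id]

theorem homLimCanonical_surjective_of_countable_dim_general
    (R : Type) [Field R]
    (M : ℕ → Type) [∀ i, AddCommGroup (M i)] [∀ i, Module R (M i)]
    (g : ∀ i : ℕ, M (i + 1) →ₗ[R] M i)
    (N : Type) [AddCommGroup N] [Module R N]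
    (hdim : Module.rank R ↥(invLim R M g) ≤ ℵ₀) :
    Function.Surjective (homLimCanonical R M g N) := by
  obtain ⟨i, hi⟩ := exists_eq_bot_of_rank_le_aleph0 antitone_ker_limProj iInf_ker_limProj
    isCompleteFiltration_ker_limProj hdim
  exact homLimCanonical_surjective_of_injective_limProj N (LinearMap.ker_eq_bot.1 hi)

/-- Let `R` be a field, `(Mᵢ, gᵢ)` an inverse sequence of countably generated `R`-modules
and `N` an `R`-module.  If the inverse limit `lim Mᵢ` has countable dimension over `R`, then
the canonical map `lim→ Hom_R(Mᵢ, N) → Hom_R(lim Mᵢ, N)` is surjective. -/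
theorem homLimCanonical_surjective_of_countable_dim
    (R : Type) [Field R]
    (M : ℕ → Type) [∀ i, AddCommGroup (M i)] [∀ i, Module R (M i)]
    (g : ∀ i : ℕ, M (i + 1) →ₗ[R] M i)
    (N : Type) [AddCommGroup N] [Module R N]
    (hcg : ∀ i : ℕ, CountablyGeneratedMod R (M i))
    (hdim : Module.rank R ↥(invLim R M g) ≤ ℵ₀) :
    Function.Surjective (homLimCanonical R M g N) :=
  homLimCanonical_surjective_of_countable_dim_general R M g N hdim
end
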